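/- Let ρ and σ be density matrices on a d-dimensional Hilbert space with (1/2)‖ρ − σ‖₁ ≤ ε ≤ 1 − 1/d. Then |S(ρ) − S(σ)| ≤ ε·log(d−1) + h₂(ε), where h₂ is the binary entropy function. -/

import Mathlib

open scoped BigOperators ComplexOrder
open Matrix

noncomputable section
attribute [local instance] Classical.propDecidable

/-- `-x log₂ x`, extended by `0` for non-positive `x`. -/
def negxlog2 (x : ℝ) : ℝ := if x ≤ 0 then 0 else -(x * Real.logb 2 x)

/-- Von Neumann entropy (base 2) of a matrix, via eigenvalues of a Hermitian matrix
(junk value `0` on non-Hermitian matrices). -/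
def entropy {n : Type} [Fintype n] [DecidableEq n] (M : Matrix n n ℂ) : ℝ :=
  if h : M.IsHermitian then ∑ i, negxlog2 (h.eigenvalues i) else 0

/-- Partial trace over the right (second) factor. -/
def ptraceRight {A R : Type} [Fintype A] [Fintype R]
    (M : Matrix (A × R) (A × R) ℂ) : Matrix A A ℂ :=
  Matrix.of fun a a' => ∑ r, M (a, r) (a', r)

/-- Partial trace over the left (first) factor. -/
def ptraceLeft {A R : Type} [Fintype A] [Fintype R]
    (M : Matrix (A × R) (A × R) ℂ) : Matrix R R ℂ :=
  Matrix.of fun r r' => ∑ a, M (a, r) (a, r')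

/-- Quantum mutual information `I(A:R) = S(A) + S(R) - S(AR)` of a bipartite matrix. -/
def mutualInfo {A R : Type} [Fintype A] [DecidableEq A] [Fintype R] [DecidableEq R]
    (M : Matrix (A × R) (A × R) ℂ) : ℝ :=
  entropy (ptraceRight M) + entropy (ptraceLeft M) - entropy M

/-- The extension `Φ ⊗ id_n` of a linear map on matrices, applied entrywise. -/
def matExt {A B n : Type} [Fintype A] [Fintype B] [Fintype n]
    (Φ : Matrix A A ℂ →ₗ[ℂ] Matrix B B ℂ) (M : Matrix (A × n) (A × n) ℂ) :
    Matrix (B × n) (B × n) ℂ :=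
  Matrix.of fun p q => Φ (Matrix.of fun a a' => M (a, p.2) (a', q.2)) p.1 q.1

/-- A linear map on matrices is a quantum channel if it is completely positive
(all extensions preserve positive semidefiniteness) and trace preserving. -/
def IsQChannel {A B : Type} [Fintype A] [Fintype B]
    (Φ : Matrix A A ℂ →ₗ[ℂ] Matrix B B ℂ) : Prop :=
  (∀ (n : Type) [Fintype n], ∀ M : Matrix (A × n) (A × n) ℂ,
      M.PosSemidef → (matExt Φ M).PosSemidef) ∧
  ∀ M : Matrix A A ℂ, (Φ M).trace = M.trace

/-- Density matrix predicate. -/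
def IsDensity {n : Type} [Fintype n] (M : Matrix n n ℂ) : Prop :=
  M.PosSemidef ∧ M.trace = 1

/-- The rank-one matrix `|v⟩⟨v|`. -/
def pureMat {d : Type} (v : d → ℂ) : Matrix d d ℂ :=
  Matrix.of fun i j => v i * (starRingEnd ℂ) (v j)

/-- `ψ` (a vector on `A ⊗ A' ⊗ R`) purifies the bipartite state `ρ` on `A ⊗ R`. -/
def Purifies {A A' R : Type} [Fintype A'] (ψ : A × A' × R → ℂ)
    (ρ : Matrix (A × R) (A × R) ℂ) : Prop :=
  ∀ a r a' r', ρ (a, r) (a', r') = ∑ x, ψ (a, x, r) * (starRingEnd ℂ) (ψ (a', x, r'))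

/-- The state on `A ⊗ A''` obtained from the purification `ψ` by applying `Φ` to the
purifying system `A'` and tracing out `R`. -/
def epOut {A A' A'' R : Type} [Fintype A] [Fintype A'] [Fintype A''] [Fintype R]
    (ψ : A × A' × R → ℂ) (Φ : Matrix A' A' ℂ →ₗ[ℂ] Matrix A'' A'' ℂ) :
    Matrix (A × A'') (A × A'') ℂ :=
  Matrix.of fun p q => ∑ r, Φ (Matrix.of fun x x' =>
      ψ (p.1, x, r) * (starRingEnd ℂ) (ψ (q.1, x', r))) p.2 q.2

/-- Witness predicate for the entanglement of purification. -/
def EpWitness {A R : Type} [Fintype A] [DecidableEq A] [Fintype R]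
    (ρ : Matrix (A × R) (A × R) ℂ) (e : ℝ)
    (A' A'' : Type) [Fintype A'] [Fintype A''] [DecidableEq A''] : Prop :=
  ∃ (ψ : A × A' × R → ℂ) (Φ : Matrix A' A' ℂ →ₗ[ℂ] Matrix A'' A'' ℂ),
    Purifies ψ ρ ∧ IsQChannel Φ ∧ e = entropy (epOut ψ Φ)

/-- Entanglement of purification `E_p(A:R)` of a bipartite matrix: the infimum of
`S(A A'')` over purifications and channels applied to the purifying system. -/
def Ep {A R : Type} [Fintype A] [DecidableEq A] [Fintype R]
    (ρ : Matrix (A × R) (A × R) ℂ) : ℝ :=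
  sInf { e : ℝ | ∃ (A' A'' : Type) (i1 : Fintype A') (i2 : Fintype A'')
      (i3 : DecidableEq A''), @EpWitness A R _ _ _ ρ e A' A'' i1 i2 i3 }

/-- The positive semidefinite square root of a positive semidefinite matrix
(the definition Mathlib had, since removed from Mathlib). -/
def Matrix.PosSemidef.sqrt {n 𝕜 : Type*} [Fintype n] [DecidableEq n] [RCLike 𝕜]
    {A : Matrix n n 𝕜} (hA : A.PosSemidef) : Matrix n n 𝕜 :=
  (hA.1.eigenvectorUnitary : Matrix n n 𝕜) * diagonal ((↑) ∘ (√·) ∘ hA.1.eigenvalues) *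
    (star hA.1.eigenvectorUnitary : Matrix n n 𝕜)

/-- Fidelity `F(ρ,σ) = (tr √(√ρ σ √ρ))²` (junk value `0` off positive semidefinite pairs). -/
def fidelity {n : Type} [Fintype n] [DecidableEq n] (ρ σ : Matrix n n ℂ) : ℝ :=
  if h : ρ.PosSemidef ∧ σ.PosSemidef then
    if h2 : (h.1.sqrt * σ * h.1.sqrt).PosSemidef then (h2.sqrt.trace.re) ^ 2 else 0
  else 0

/-- Trace norm (sum of singular values) of a complex matrix. -/
def traceNorm {n : Type} [Fintype n] [DecidableEq n] (M : Matrix n n ℂ) : ℝ :=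
  if h : (Mᴴ * M).PosSemidef then h.sqrt.trace.re else 0

/-- Binary entropy function (base 2). -/
def binEntropy (x : ℝ) : ℝ := -(x * Real.logb 2 x) - (1 - x) * Real.logb 2 (1 - x)

/-!
Both entropies depend only on the spectra, listed in decreasing order. Writing
`ρ - σ = Δ⁺ - Δ⁻`, the matrix `σ + Δ⁺ = ρ + Δ⁻` dominates `ρ` and `σ`, so by Weyl's monotonicity
principle the `ℓ¹` distance of the sorted spectra is at most `tr Δ⁺ + tr Δ⁻ = ‖ρ - σ‖₁`
(Mirsky's inequality). This reduces the claim to the classical Fannes–Audenaert inequality for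
probability vectors `p`, `q` at total variation distance `T`: along the optimal coupling `(X, Y)`,
`H(p) ≤ H(X, Y) = H(q) + H(X | Y)`, and Fano's inequality bounds `H(X | Y)` by
`h(T) + T log (d - 1)`, which increases in `T` on `[0, 1 - 1/d]`.
-/

open Module
open scoped InnerProductSpace MatrixOrder

namespace Real

open Finset

variable {ι : Type*}

theorem negMulLog_sum_le (s : Finset ι) {x : ι → ℝ} (hx : ∀ i ∈ s, 0 ≤ x i) :
    negMulLog (∑ i ∈ s, x i) ≤ ∑ i ∈ s, negMulLog (x i) := by
  rw [negMulLog, neg_mul, sum_mul, ← sum_neg_distrib]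
  refine sum_le_sum fun i hi => ?_
  rcases (hx i hi).eq_or_lt with h0 | h0
  · simp [← h0, negMulLog]
  · rw [negMulLog, neg_mul, neg_le_neg_iff]
    exact mul_le_mul_of_nonneg_left (log_le_log h0 (single_le_sum hx hi)) (hx i hi)

theorem sum_negMulLog_le (s : Finset ι) {x : ι → ℝ} (hx : ∀ i ∈ s, 0 ≤ x i) :
    ∑ i ∈ s, negMulLog (x i) ≤ negMulLog (∑ i ∈ s, x i) + (∑ i ∈ s, x i) * log #s := by
  rcases s.eq_empty_or_nonempty with rfl | hs
  · simp
  have hN : (0 : ℝ) < #s := by exact_mod_cast hs.card_pos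
  have jensen := concaveOn_negMulLog.le_map_sum (t := s) (w := fun _ => (#s : ℝ)⁻¹) (p := x)
    (fun _ _ => by positivity) (by simp [hN.ne']) (fun i hi => Set.mem_Ici.2 (hx i hi))
  have hinv : negMulLog (#s : ℝ)⁻¹ = (#s : ℝ)⁻¹ * log #s := by
    rw [negMulLog, log_inv]; ring
  rw [← smul_sum, ← smul_sum, smul_eq_mul, smul_eq_mul, mul_comm, negMulLog_mul, hinv] at jensen
  rw [← mul_le_mul_iff_of_pos_left (inv_pos.mpr hN)]
  linarith

theorem sum_negMulLog_le_fano [Fintype ι] [DecidableEq ι] {x : ι → ℝ} (hx : ∀ i, 0 ≤ x i)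
    (j : ι) :
    ∑ i, negMulLog (x i) ≤ negMulLog (x j) + negMulLog (∑ i ∈ univ.erase j, x i) +
      (∑ i ∈ univ.erase j, x i) * log (Fintype.card ι - 1) := by
  have hcard : ((univ.erase j).card : ℝ) = Fintype.card ι - 1 := by
    rw [card_erase_of_mem (mem_univ j), card_univ,
      Nat.cast_sub (Fintype.card_pos_iff.mpr ⟨j⟩), Nat.cast_one]
  rw [← add_sum_erase _ _ (mem_univ j), add_assoc, ← hcard]
  exact add_le_add_right (sum_negMulLog_le _ fun i _ => hx i) _

theorem negMulLog_add_negMulLog_eq {x y : ℝ} (hx : 0 ≤ x) (hy : 0 ≤ y) :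
    negMulLog x + negMulLog y = negMulLog (x + y) + (x + y) * binEntropy (y / (x + y)) := by
  rcases (add_nonneg hx hy).eq_or_lt with hs | hs
  · obtain ⟨rfl, rfl⟩ : x = 0 ∧ y = 0 := ⟨by linarith, by linarith⟩
    simp
  have hx' : x = (x + y) * (x / (x + y)) := by field_simp
  have hy' : y = (x + y) * (y / (x + y)) := by field_simp
  have h1 : 1 - y / (x + y) = x / (x + y) := by field_simp; ring
  rw [binEntropy_eq_negMulLog_add_negMulLog_one_sub, h1]
  conv_lhs => rw [hx', hy', negMulLog_mul, negMulLog_mul]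
  field_simp
  ring

theorem sum_negMulLog_add_negMulLog_le [Fintype ι] {x y : ι → ℝ} (hx : ∀ i, 0 ≤ x i)
    (hy : ∀ i, 0 ≤ y i) (h1 : ∑ i, (x i + y i) = 1) :
    ∑ i, (negMulLog (x i) + negMulLog (y i)) ≤
      ∑ i, negMulLog (x i + y i) + binEntropy (∑ i, y i) := by
  have hxy : ∀ i, 0 ≤ x i + y i := fun i => add_nonneg (hx i) (hy i)
  have hw : ∀ i, (x i + y i) * (y i / (x i + y i)) = y i := fun i => by
    rcases (hxy i).eq_or_lt with h | h
    · rw [← h, zero_mul]; linarith [hx i, hy i]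
    · field_simp
  have jensen := strictConcave_binEntropy.concaveOn.le_map_sum (t := univ)
    (fun i _ => hxy i) h1 (p := fun i => y i / (x i + y i)) fun i _ =>
      ⟨div_nonneg (hy i) (hxy i), div_le_one_of_le₀ (le_add_of_nonneg_left (hx i)) (hxy i)⟩
  simp only [smul_eq_mul, hw] at jensen
  simp only [negMulLog_add_negMulLog_eq (hx _) (hy _), sum_add_distrib]
  linarith

theorem sum_negMulLog_add_le [Fintype ι] [DecidableEq ι] {m a b : ι → ℝ} (hm : ∀ i, 0 ≤ m i)
    (ha : ∀ i, 0 ≤ a i) (hb : ∀ i, 0 ≤ b i) (hab : ∀ i, a i * b i = 0)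
    (hsum : ∑ i, a i = ∑ i, b i) (h1 : ∑ i, (m i + b i) = 1) :
    ∑ i, negMulLog (m i + a i) ≤ ∑ i, negMulLog (m i + b i) + binEntropy (∑ i, b i) +
      (∑ i, b i) * log (Fintype.card ι - 1) := by
  set T := ∑ i, b i
  set L := log (Fintype.card ι - 1)
  obtain hT | hT := (show 0 ≤ T from sum_nonneg fun i _ => hb i).eq_or_lt
  · have hb0 : ∀ i, b i = 0 := fun i =>
      (sum_eq_zero_iff_of_nonneg fun i _ => hb i).mp hT.symm i (mem_univ i)
    have ha0 : ∀ i, a i = 0 := fun i =>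
      (sum_eq_zero_iff_of_nonneg fun i _ => ha i).mp (hsum.trans hT.symm) i (mem_univ i)
    rw [← hT]
    simp [ha0, hb0]
  -- a coupling of `m + a` and `m + b` that disagrees with probability `T`; Fano's inequality
  -- is applied to each of its columns
  set r : ι → ι → ℝ := fun i j => (if i = j then m i else 0) + a i * b j / T
  have hr0 : ∀ i j, 0 ≤ r i j := fun i j =>
    add_nonneg (by split_ifs <;> simp [hm]) (div_nonneg (mul_nonneg (ha i) (hb j)) hT.le)
  have hrow : ∀ i, ∑ j, r i j = m i + a i := fun i => by
    simp only [r, sum_add_distrib, sum_ite_eq, mem_univ, if_true, ← sum_div, ← mul_sum]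
    rw [mul_div_assoc, div_self hT.ne', mul_one]
  have hdiag : ∀ j, r j j = m j := fun j => by simp [r, hab]
  have hcol : ∀ j, ∑ i ∈ univ.erase j, r i j = b j := fun j => by
    have hoff : ∀ i ∈ univ.erase j, r i j = a i * b j / T := fun i hi => by
      simp [r, ne_of_mem_erase hi]
    rw [sum_congr rfl hoff, ← sum_div, ← sum_mul, sum_erase_eq_sub (mem_univ j), hsum,
      sub_mul, hab, sub_zero, mul_div_cancel_left₀ _ hT.ne']
  calc ∑ i, negMulLog (m i + a i)
      = ∑ i, negMulLog (∑ j, r i j) := by simp only [hrow]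
    _ ≤ ∑ i, ∑ j, negMulLog (r i j) :=
        sum_le_sum fun i _ => negMulLog_sum_le _ fun j _ => hr0 i j
    _ = ∑ j, ∑ i, negMulLog (r i j) := sum_comm
    _ ≤ ∑ j, (negMulLog (m j) + negMulLog (b j) + b j * L) := sum_le_sum fun j _ => by
        simpa only [hdiag, hcol] using sum_negMulLog_le_fano (fun i => hr0 i j) j
    _ = ∑ j, (negMulLog (m j) + negMulLog (b j)) + T * L := by
        rw [sum_add_distrib, sum_mul]
    _ ≤ ∑ i, negMulLog (m i + b i) + binEntropy T + T * L := by
        linarith [sum_negMulLog_add_negMulLog_le hm hb h1]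

theorem qaryEntropy_monotoneOn {q : ℕ} (hq : q ≠ 0) :
    MonotoneOn (qaryEntropy q) (Set.Icc 0 (1 - 1 / q)) := by
  obtain rfl | hq2 : q = 1 ∨ 2 ≤ q := by omega
  · norm_num [Set.Icc_self, Set.monotoneOn_singleton]
  · exact (qaryEntropy_strictMonoOn hq2).monotoneOn

theorem sum_negMulLog_sub_le [Fintype ι] {p q : ι → ℝ} (hp : ∀ i, 0 ≤ p i) (hq : ∀ i, 0 ≤ q i)
    (hp1 : ∑ i, p i = 1) (hq1 : ∑ i, q i = 1) :
    ∑ i, negMulLog (p i) - ∑ i, negMulLog (q i) ≤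
      qaryEntropy (Fintype.card ι) ((∑ i, |p i - q i|) / 2) := by
  set m := fun i => min (p i) (q i)
  have hab : ∀ i, (p i - m i) * (q i - m i) = 0 := fun i => by
    rcases le_total (p i) (q i) with h | h <;> simp [m, h]
  have habs : ∀ i, (p i - m i) + (q i - m i) = |p i - q i| := fun i => by
    rcases le_total (p i) (q i) with h | h
    · simp [m, h, abs_of_nonpos (sub_nonpos.mpr h)]
    · simp [m, h, abs_of_nonneg (sub_nonneg.mpr h)]
  have hsum : ∑ i, (p i - m i) = ∑ i, (q i - m i) := by
    simp only [sum_sub_distrib, hp1, hq1]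
  have hT : ∑ i, (q i - m i) = (∑ i, |p i - q i|) / 2 := by
    rw [← sum_congr rfl fun i _ => habs i, sum_add_distrib, hsum]
    ring
  have key := sum_negMulLog_add_le (fun i => le_min (hp i) (hq i))
    (fun i => sub_nonneg.mpr (min_le_left _ _)) (fun i => sub_nonneg.mpr (min_le_right _ _))
    hab hsum (by simpa using hq1)
  rw [hT] at key
  simp only [add_sub_cancel] at key
  rw [qaryEntropy]
  push_cast
  linarith

theorem abs_sum_negMulLog_sub_le [Fintype ι] {p q : ι → ℝ} (hp : ∀ i, 0 ≤ p i)
    (hq : ∀ i, 0 ≤ q i) (hp1 : ∑ i, p i = 1) (hq1 : ∑ i, q i = 1) {ε : ℝ}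
    (hε : (∑ i, |p i - q i|) / 2 ≤ ε) (hε1 : ε ≤ 1 - 1 / (Fintype.card ι : ℝ)) :
    |∑ i, negMulLog (p i) - ∑ i, negMulLog (q i)| ≤ qaryEntropy (Fintype.card ι) ε := by
  have hcard : Fintype.card ι ≠ 0 := by
    rintro h
    simp [Fintype.card_eq_zero_iff.mp h] at hp1
  have hT : 0 ≤ (∑ i, |p i - q i|) / 2 := by positivity
  have hmono := qaryEntropy_monotoneOn hcard ⟨hT, hε.trans hε1⟩ ⟨hT.trans hε, hε1⟩ hε
  have hpq := sum_negMulLog_sub_le hp hq hp1 hq1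
  have hqp := sum_negMulLog_sub_le hq hp hq1 hp1
  simp only [abs_sub_comm (q _)] at hqp
  rw [abs_le]
  constructor <;> linarith

end Real

theorem OrthonormalBasis.repr_apply_eq_zero_of_mem_span {ι 𝕜 E : Type*} [Fintype ι] [RCLike 𝕜]
    [NormedAddCommGroup E] [InnerProductSpace 𝕜 E] (b : OrthonormalBasis ι 𝕜 E) {s : Set ι}
    {x : E} (hx : x ∈ Submodule.span 𝕜 (b '' s)) {i : ι} (hi : i ∉ s) : b.repr x i = 0 := by
  rw [← b.coe_toBasis, Module.Basis.mem_span_image] at hx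
  rw [← b.coe_toBasis_repr_apply]
  exact Finsupp.notMem_support_iff.mp fun h => hi (hx h)

theorem OrthonormalBasis.finrank_span_image {ι 𝕜 E : Type*} [Fintype ι] [RCLike 𝕜]
    [NormedAddCommGroup E] [InnerProductSpace 𝕜 E] (b : OrthonormalBasis ι 𝕜 E) (s : Finset ι) :
    finrank 𝕜 (Submodule.span 𝕜 (b '' s)) = s.card := by
  rw [Set.image_eq_range, ← Fintype.card_coe s]
  exact finrank_span_eq_card (b.orthonormal.linearIndependent.comp _ Subtype.val_injective)

namespace LinearMap.IsSymmetric

variable {𝕜 E : Type*} [RCLike 𝕜] [NormedAddCommGroup E] [InnerProductSpace 𝕜 E]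
  [FiniteDimensional 𝕜 E] {T : E →ₗ[𝕜] E} {n : ℕ}

theorem re_inner_apply_self_eq_sum (hT : T.IsSymmetric) (hn : finrank 𝕜 E = n) (x : E) :
    RCLike.re ⟪T x, x⟫_𝕜 =
      ∑ i, hT.eigenvalues hn i * ‖(hT.eigenvectorBasis hn).repr x i‖ ^ 2 := by
  rw [← (hT.eigenvectorBasis hn).repr.inner_map_map, PiLp.inner_apply, map_sum]
  refine Fintype.sum_congr _ _ fun i => ?_
  rw [eigenvectorBasis_apply_self_apply, ← smul_eq_mul, inner_smul_real_left (𝕜 := 𝕜),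
    RCLike.smul_re, inner_self_eq_norm_sq]

theorem mul_norm_sq_le_re_inner (hT : T.IsSymmetric) (hn : finrank 𝕜 E = n) {s : Set (Fin n)}
    {c : ℝ} (hc : ∀ i ∈ s, c ≤ hT.eigenvalues hn i) {x : E}
    (hx : x ∈ Submodule.span 𝕜 (hT.eigenvectorBasis hn '' s)) :
    c * ‖x‖ ^ 2 ≤ RCLike.re ⟪T x, x⟫_𝕜 := by
  rw [re_inner_apply_self_eq_sum, ← (hT.eigenvectorBasis hn).repr.norm_map,
    EuclideanSpace.norm_sq_eq, Finset.mul_sum]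
  refine Finset.sum_le_sum fun i _ => ?_
  by_cases hi : i ∈ s
  · exact mul_le_mul_of_nonneg_right (hc i hi) (sq_nonneg _)
  · simp [(hT.eigenvectorBasis hn).repr_apply_eq_zero_of_mem_span hx hi]

theorem re_inner_le_mul_norm_sq (hT : T.IsSymmetric) (hn : finrank 𝕜 E = n) {s : Set (Fin n)}
    {c : ℝ} (hc : ∀ i ∈ s, hT.eigenvalues hn i ≤ c) {x : E}
    (hx : x ∈ Submodule.span 𝕜 (hT.eigenvectorBasis hn '' s)) :
    RCLike.re ⟪T x, x⟫_𝕜 ≤ c * ‖x‖ ^ 2 := by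
  rw [re_inner_apply_self_eq_sum, ← (hT.eigenvectorBasis hn).repr.norm_map,
    EuclideanSpace.norm_sq_eq, Finset.mul_sum]
  refine Finset.sum_le_sum fun i _ => ?_
  by_cases hi : i ∈ s
  · exact mul_le_mul_of_nonneg_right (hc i hi) (sq_nonneg _)
  · simp [(hT.eigenvectorBasis hn).repr_apply_eq_zero_of_mem_span hx hi]

theorem eigenvalues_mono {S : E →ₗ[𝕜] E} (hS : S.IsSymmetric) (hT : T.IsSymmetric)
    (hn : finrank 𝕜 E = n) (hST : S ≤ T) (k : Fin n) :
    hS.eigenvalues hn k ≤ hT.eigenvalues hn k := by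
  set u := hS.eigenvectorBasis hn
  set v := hT.eigenvectorBasis hn
  -- Weyl's argument: the top `k + 1` eigenvectors of `S` and the bottom `n - k` eigenvectors
  -- of `T` span subspaces of total dimension `n + 1`, which therefore meet
  obtain ⟨x, hxu, hxv, hx0⟩ : ∃ x ∈ Submodule.span 𝕜 (u '' ↑(Finset.Iic k)),
      x ∈ Submodule.span 𝕜 (v '' ↑(Finset.Ici k)) ∧ x ≠ 0 := by
    by_contra! h
    have := Submodule.finrank_add_finrank_le_of_disjoint (Submodule.disjoint_def.mpr h)
    rw [u.finrank_span_image, v.finrank_span_image, Fin.card_Iic, Fin.card_Ici, hn] at this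
    omega
  have hSx : hS.eigenvalues hn k * ‖x‖ ^ 2 ≤ RCLike.re ⟪S x, x⟫_𝕜 :=
    hS.mul_norm_sq_le_re_inner hn
      (fun i hi => hS.eigenvalues_antitone hn (Finset.mem_Iic.mp hi)) hxu
  have hTx : RCLike.re ⟪T x, x⟫_𝕜 ≤ hT.eigenvalues hn k * ‖x‖ ^ 2 :=
    hT.re_inner_le_mul_norm_sq hn
      (fun i hi => hT.eigenvalues_antitone hn (Finset.mem_Ici.mp hi)) hxv
  have hSTx : RCLike.re ⟪S x, x⟫_𝕜 ≤ RCLike.re ⟪T x, x⟫_𝕜 := by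
    have := ((LinearMap.le_def S T).mp hST).re_inner_nonneg_left x
    rwa [LinearMap.sub_apply, inner_sub_left, map_sub, sub_nonneg] at this
  exact le_of_mul_le_mul_right (hSx.trans (hSTx.trans hTx)) (by positivity)

end LinearMap.IsSymmetric

namespace Matrix

theorem PosSemidef.sqrt_eq_cfcSqrt {n 𝕜 : Type*} [Fintype n] [DecidableEq n] [RCLike 𝕜]
    {A : Matrix n n 𝕜} (hA : A.PosSemidef) : hA.sqrt = CFC.sqrt A := by
  rw [CFC.sqrt_eq_real_sqrt A hA.nonneg, cfcₙ_eq_cfc, hA.1.cfc_eq, IsHermitian.cfc,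
    Unitary.conjStarAlgAut_apply]
  rfl

variable {𝕜 n : Type*} [RCLike 𝕜] [Fintype n] [DecidableEq n] {A B : Matrix n n 𝕜}

theorem PosSemidef.eigenvalues₀_nonneg (hA : A.PosSemidef) (k : Fin (Fintype.card n)) :
    0 ≤ hA.1.eigenvalues₀ k := by
  simpa [IsHermitian.eigenvalues] using
    hA.eigenvalues_nonneg (Fintype.equivOfCardEq (Fintype.card_fin _) k)

namespace IsHermitian

theorem eigenvalues₀_mono (hA : A.IsHermitian) (hB : B.IsHermitian) (hAB : A ≤ B)
    (k : Fin (Fintype.card n)) : hA.eigenvalues₀ k ≤ hB.eigenvalues₀ k :=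
  LinearMap.IsSymmetric.eigenvalues_mono _ _ _
    (by rwa [LinearMap.le_def, ← map_sub, isPositive_toEuclideanLin_iff]) k

theorem sum_comp_eigenvalues (hA : A.IsHermitian) {M : Type*} [AddCommMonoid M] (f : ℝ → M) :
    ∑ i, f (hA.eigenvalues i) = ∑ k, f (hA.eigenvalues₀ k) :=
  Equiv.sum_comp (Fintype.equivOfCardEq (Fintype.card_fin _)).symm (f ∘ hA.eigenvalues₀)

theorem sum_eigenvalues₀ (hA : A.IsHermitian) : ∑ k, hA.eigenvalues₀ k = RCLike.re A.trace := by
  rw [hA.trace_eq_sum_eigenvalues, hA.sum_comp_eigenvalues (fun x : ℝ => (x : 𝕜)), map_sum]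
  simp

end IsHermitian

end Matrix

theorem traceNorm_eq_re_trace_abs {n : Type} [Fintype n] [DecidableEq n] (M : Matrix n n ℂ) :
    traceNorm M = (CFC.abs M).trace.re := by
  rw [traceNorm, dif_pos (posSemidef_conjTranspose_mul_self M), PosSemidef.sqrt_eq_cfcSqrt]
  rfl

theorem Matrix.IsHermitian.sum_abs_sub_eigenvalues₀_le_traceNorm {n : Type} [Fintype n]
    [DecidableEq n] {A B : Matrix n n ℂ} (hA : A.IsHermitian) (hB : B.IsHermitian) :
    ∑ k, |hA.eigenvalues₀ k - hB.eigenvalues₀ k| ≤ traceNorm (A - B) := by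
  set Δ := A - B
  have hM : B + Δ⁺ = A + Δ⁻ := by
    have := CFC.posPart_sub_negPart Δ (hA.sub hB)
    rw [sub_eq_sub_iff_add_eq_add] at this
    rw [add_comm, this]
  have hMh : (B + Δ⁺).IsHermitian := hB.add (CFC.posPart_nonneg Δ).isSelfAdjoint
  have hAM : A ≤ B + Δ⁺ := hM ▸ le_add_of_nonneg_right (CFC.negPart_nonneg Δ)
  have hBM : B ≤ B + Δ⁺ := le_add_of_nonneg_right (CFC.posPart_nonneg Δ)
  calc ∑ k, |hA.eigenvalues₀ k - hB.eigenvalues₀ k|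
      ≤ ∑ k, ((hMh.eigenvalues₀ k - hA.eigenvalues₀ k) +
          (hMh.eigenvalues₀ k - hB.eigenvalues₀ k)) := by
        refine Finset.sum_le_sum fun k _ => abs_sub_le_iff.mpr ⟨?_, ?_⟩ <;>
          linarith [hA.eigenvalues₀_mono hMh hAM k, hB.eigenvalues₀_mono hMh hBM k]
    _ = ((A + Δ⁻).trace - A.trace + ((B + Δ⁺).trace - B.trace)).re := by
        simp only [Finset.sum_add_distrib, Finset.sum_sub_distrib, sum_eigenvalues₀, hM]
        simp
    _ = traceNorm Δ := by
        rw [traceNorm_eq_re_trace_abs, ← CFC.posPart_add_negPart Δ (hA.sub hB)]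
        simp only [trace_add, Complex.add_re, Complex.sub_re]
        ring

theorem negxlog2_eq_negMulLog_div {x : ℝ} (hx : 0 ≤ x) :
    negxlog2 x = Real.negMulLog x / Real.log 2 := by
  rcases hx.eq_or_lt with rfl | hx
  · simp [negxlog2]
  · rw [negxlog2, if_neg hx.not_ge, Real.negMulLog, Real.logb]
    ring

theorem Matrix.PosSemidef.entropy_eq {n : Type} [Fintype n] [DecidableEq n] {A : Matrix n n ℂ}
    (hA : A.PosSemidef) :
    entropy A = (∑ k, Real.negMulLog (hA.1.eigenvalues₀ k)) / Real.log 2 := by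
  rw [entropy, dif_pos hA.1, hA.1.sum_comp_eigenvalues negxlog2, Finset.sum_div]
  exact Finset.sum_congr rfl fun k _ => negxlog2_eq_negMulLog_div (hA.eigenvalues₀_nonneg k)

theorem logb_mul_add_binEntropy_eq_qaryEntropy_div (d : ℕ) (ε : ℝ) :
    ε * Real.logb 2 ((d : ℝ) - 1) + binEntropy ε = Real.qaryEntropy d ε / Real.log 2 := by
  rw [Real.qaryEntropy, binEntropy, Real.binEntropy, Real.logb, Real.logb, Real.logb,
    Real.log_inv, Real.log_inv]
  push_cast
  ring

/-- the Fannes inequality. -/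
theorem fannes_inequality {n : Type} [Fintype n] [DecidableEq n]
    (ρ σ : Matrix n n ℂ) (hρ : IsDensity ρ) (hσ : IsDensity σ) (ε : ℝ)
    (h1 : (1 / 2) * traceNorm (ρ - σ) ≤ ε)
    (h2 : ε ≤ 1 - 1 / (Fintype.card n : ℝ)) :
    |entropy ρ - entropy σ| ≤ ε * Real.logb 2 ((Fintype.card n : ℝ) - 1) + binEntropy ε := by
  have hρ1 : ∑ k, hρ.1.1.eigenvalues₀ k = 1 := by simp [hρ.1.1.sum_eigenvalues₀, hρ.2]
  have hσ1 : ∑ k, hσ.1.1.eigenvalues₀ k = 1 := by simp [hσ.1.1.sum_eigenvalues₀, hσ.2]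
  have hdist : (∑ k, |hρ.1.1.eigenvalues₀ k - hσ.1.1.eigenvalues₀ k|) / 2 ≤ ε := by
    linarith [hρ.1.1.sum_abs_sub_eigenvalues₀_le_traceNorm hσ.1.1]
  have hpq := Real.abs_sum_negMulLog_sub_le hρ.1.eigenvalues₀_nonneg
    hσ.1.eigenvalues₀_nonneg hρ1 hσ1 hdist (by rwa [Fintype.card_fin])
  rw [Fintype.card_fin] at hpq
  have hlog2 : 0 < Real.log 2 := Real.log_pos one_lt_two
  rw [hρ.1.entropy_eq, hσ.1.entropy_eq, logb_mul_add_binEntropy_eq_qaryEntropy_div, ← sub_div,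
    abs_div, abs_of_pos hlog2]
  exact div_le_div_of_nonneg_right hpq hlog2.le
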